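/- Let (G, G_+) be a countable, weakly unperforated, directed partially ordered abelian group with the Riesz interpolation property. Let a_1, …, a_m and b_1, …, b_n be elements of G_+ with Σ_{i=1}^m a_i = Σ_{j=1}^n b_j, and let R ⊆ {1, …, m} × {1, …, n} be such that for every subset A ⊆ {1, …, m}, Σ_{i∈A} a_i ≤ Σ_{j∈R_A} b_j. Then there exist c_{ij} ∈ G_+ (1 ≤ i ≤ m, 1 ≤ j ≤ n) such that Σ_{j=1}^n c_{ij} = a_i for every i, Σ_{i=1}^m c_{ij} = b_j for every j, and c_{ij} = 0 unless (i, j) ∈ R. -/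

import Mathlib

/-!
Induction on `R`. Pick `(i₀, j₀) ∈ R`, put an amount `g ≥ 0` on the entry `c i₀ j₀`, subtract it
from `a i₀` and `b j₀`, and delete `(i₀, j₀)` from `R`. Writing `s A = ∑_{R_A} b - ∑_A a` for the
surplus of `A`, the Hall condition survives this step iff `0 ≤ g ≤ a i₀, b j₀`,
`b j₀ - s A₁ ≤ g` whenever `i₀ ∈ A₁` and `A₁` reaches `j₀` only through `i₀`, and `g ≤ s A₂`
whenever `i₀ ∉ A₂` and `A₂` reaches `j₀`. Every lower bound lies below every upper bound: compare
with the Hall condition for `A₁ \ {i₀}`, resp. for `A₁ ∪ A₂` and `A₁ ∩ A₂` (the latter misses `j₀`).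
Riesz interpolation between these finitely many bounds then produces `g`.
-/

/-- For `R ⊆ {1,…,m} × {1,…,n}` and `A ⊆ {1,…,m}`, the set
`R_A = {j : (i,j) ∈ R for some i ∈ A}`. -/
def RA {m n : ℕ} (R : Finset (Fin m × Fin n)) (A : Finset (Fin m)) : Finset (Fin n) :=
  (R.filter (fun p => p.1 ∈ A)).image Prod.snd

open Finset

def RieszInterpolation (G : Type*) [LE G] : Prop :=
  ∀ a₁ a₂ b₁ b₂ : G, a₁ ≤ b₁ → a₁ ≤ b₂ → a₂ ≤ b₁ → a₂ ≤ b₂ →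
    ∃ c : G, a₁ ≤ c ∧ a₂ ≤ c ∧ c ≤ b₁ ∧ c ≤ b₂

namespace RieszInterpolation

variable {G : Type*} [Preorder G]

theorem exists_between_pair_finset (hG : RieszInterpolation G) {t : Finset G} (ht : t.Nonempty)
    {x₁ x₂ : G} (h₁ : ∀ y ∈ t, x₁ ≤ y) (h₂ : ∀ y ∈ t, x₂ ≤ y) :
    ∃ c, x₁ ≤ c ∧ x₂ ≤ c ∧ ∀ y ∈ t, c ≤ y := by
  induction ht using Finset.Nonempty.cons_induction with
  | singleton y =>
    obtain ⟨c, hc₁, hc₂, hcy, -⟩ := hG x₁ x₂ y y (by simpa using h₁) (by simpa using h₁)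
      (by simpa using h₂) (by simpa using h₂)
    exact ⟨c, hc₁, hc₂, by simpa using hcy⟩
  | cons y t hy ht ih =>
    simp only [mem_cons, forall_eq_or_imp] at h₁ h₂
    obtain ⟨c₀, hc₀₁, hc₀₂, hc₀t⟩ := ih h₁.2 h₂.2
    obtain ⟨c, hc₁, hc₂, hcc₀, hcy⟩ := hG x₁ x₂ c₀ y hc₀₁ h₁.1 hc₀₂ h₂.1
    exact ⟨c, hc₁, hc₂, by simpa using ⟨hcy, fun z hz => hcc₀.trans (hc₀t z hz)⟩⟩

theorem exists_between_finset (hG : RieszInterpolation G) {s t : Finset G} (hs : s.Nonempty)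
    (ht : t.Nonempty) (hst : ∀ x ∈ s, ∀ y ∈ t, x ≤ y) :
    ∃ c, (∀ x ∈ s, x ≤ c) ∧ ∀ y ∈ t, c ≤ y := by
  induction hs using Finset.Nonempty.cons_induction with
  | singleton x =>
    obtain ⟨c, hc, -, hct⟩ := hG.exists_between_pair_finset ht (hst x (by simp)) (hst x (by simp))
    exact ⟨c, by simpa using hc, hct⟩
  | cons x s hx hs ih =>
    simp only [mem_cons, forall_eq_or_imp] at hst
    obtain ⟨c₀, hsc₀, hc₀t⟩ := ih hst.2
    obtain ⟨c, hxc, hc₀c, hct⟩ := hG.exists_between_pair_finset ht hst.1 hc₀t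
    exact ⟨c, by simpa using ⟨hxc, fun z hz => (hsc₀ z hz).trans hc₀c⟩, hct⟩

end RieszInterpolation

section Neighbourhood

variable {m n : ℕ} {R R' : Finset (Fin m × Fin n)} {A A₁ A₂ : Finset (Fin m)}

theorem mem_RA {j : Fin n} : j ∈ RA R A ↔ ∃ i ∈ A, (i, j) ∈ R := by
  simp [RA, and_comm]

theorem RA_union : RA R (A₁ ∪ A₂) = RA R A₁ ∪ RA R A₂ := by
  ext j
  simp only [mem_RA, mem_union, or_and_right, exists_or]

theorem RA_mono_right (h : A₁ ⊆ A₂) : RA R A₁ ⊆ RA R A₂ := fun j hj => by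
  obtain ⟨i, hi, hij⟩ := mem_RA.1 hj
  exact mem_RA.2 ⟨i, h hi, hij⟩

theorem RA_mono_left (h : R' ⊆ R) : RA R' A ⊆ RA R A := fun j hj => by
  obtain ⟨i, hi, hij⟩ := mem_RA.1 hj
  exact mem_RA.2 ⟨i, hi, h hij⟩

theorem RA_erase_of_notMem {p : Fin m × Fin n} (h : p.1 ∉ A) : RA (R.erase p) A = RA R A := by
  ext j
  simp only [mem_RA, mem_erase]
  exact exists_congr fun i => and_congr_right fun hi =>
    and_iff_right (by rintro rfl; exact h hi)

theorem RA_subset_insert_RA_erase (p : Fin m × Fin n) :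
    RA R A ⊆ insert p.2 (RA (R.erase p) A) := fun j hj => by
  obtain ⟨i, hi, hij⟩ := mem_RA.1 hj
  by_cases h : (i, j) = p
  · simp [← h]
  · exact mem_insert_of_mem (mem_RA.2 ⟨i, hi, mem_erase.2 ⟨h, hij⟩⟩)

end Neighbourhood

theorem Pi.single_le_of_le_apply {ι α : Type*} [DecidableEq ι] [Zero α] [Preorder α]
    {f : ι → α} {i : ι} {x : α} (hf : 0 ≤ f) (hx : x ≤ f i) : Pi.single i x ≤ f := fun j => by
  by_cases h : j = i
  · subst h; simpa using hx
  · simpa [h] using hf j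

section Hall

variable {G : Type*} {m n : ℕ}

def HallCondition [AddCommMonoid G] [LE G] (R : Finset (Fin m × Fin n)) (a : Fin m → G)
    (b : Fin n → G) : Prop :=
  ∀ A : Finset (Fin m), ∑ i ∈ A, a i ≤ ∑ j ∈ RA R A, b j

def IsTransportPlan [AddCommMonoid G] [LE G] (R : Finset (Fin m × Fin n)) (a : Fin m → G)
    (b : Fin n → G) (c : Fin m → Fin n → G) : Prop :=
  (∀ i j, 0 ≤ c i j) ∧ (∀ i, ∑ j, c i j = a i) ∧ (∀ j, ∑ i, c i j = b j) ∧
    ∀ i j, (i, j) ∉ R → c i j = 0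

def surplus [AddCommGroup G] (R : Finset (Fin m × Fin n)) (a : Fin m → G) (b : Fin n → G)
    (A : Finset (Fin m)) : G :=
  ∑ j ∈ RA R A, b j - ∑ i ∈ A, a i

variable [AddCommGroup G] [PartialOrder G] [IsOrderedAddMonoid G]
  {R : Finset (Fin m × Fin n)} {a : Fin m → G} {b : Fin n → G} {i₀ : Fin m} {j₀ : Fin n}

namespace HallCondition

theorem surplus_nonneg (hR : HallCondition R a b) (A : Finset (Fin m)) :
    0 ≤ surplus R a b A :=
  sub_nonneg.2 (hR A)

theorem eq_zero_of_empty (hR : HallCondition ∅ a b) (ha : 0 ≤ a) : a = 0 := by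
  have hle : ∑ i, a i ≤ 0 := by simpa [RA] using hR univ
  exact (Fintype.sum_eq_zero_iff_of_nonneg ha).1 (hle.antisymm (sum_nonneg fun i _ => ha i))

theorem le_add_surplus (hR : HallCondition R a b) (hb : 0 ≤ b) (hp : (i₀, j₀) ∈ R)
    {A : Finset (Fin m)} (hi : i₀ ∈ A) (hj : j₀ ∉ RA (R.erase (i₀, j₀)) A) :
    b j₀ ≤ a i₀ + surplus R a b A := by
  have hsub : RA R (A.erase i₀) ⊆ (RA R A).erase j₀ := by
    rw [← RA_erase_of_notMem (p := (i₀, j₀)) (notMem_erase i₀ A)]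
    exact subset_erase.2
      ⟨(RA_mono_right (erase_subset _ _)).trans (RA_mono_left (erase_subset _ _)),
        fun h => hj (RA_mono_right (erase_subset _ _) h)⟩
  have hle : ∑ i ∈ A.erase i₀, a i ≤ ∑ j ∈ (RA R A).erase j₀, b j :=
    (hR _).trans (sum_le_sum_of_subset_of_nonneg hsub fun j _ _ => hb j)
  rw [surplus, ← add_sub_assoc, le_sub_iff_add_le, ← sum_erase_add _ _ hi,
    ← sum_erase_add _ _ (mem_RA.2 ⟨i₀, hi, hp⟩)]
  calc b j₀ + (∑ i ∈ A.erase i₀, a i + a i₀) = a i₀ + (∑ i ∈ A.erase i₀, a i + b j₀) := by abel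
    _ ≤ a i₀ + (∑ j ∈ (RA R A).erase j₀, b j + b j₀) := add_le_add le_rfl (add_le_add hle le_rfl)

theorem le_surplus_add_surplus (hR : HallCondition R a b) (hb : 0 ≤ b) (hp : (i₀, j₀) ∈ R)
    {A₁ A₂ : Finset (Fin m)} (hi₁ : i₀ ∈ A₁) (hj₁ : j₀ ∉ RA (R.erase (i₀, j₀)) A₁)
    (hi₂ : i₀ ∉ A₂) (hj₂ : j₀ ∈ RA R A₂) :
    b j₀ ≤ surplus R a b A₁ + surplus R a b A₂ := by
  classical
  have hj : j₀ ∉ RA R (A₁ ∩ A₂) := by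
    rw [← RA_erase_of_notMem (p := (i₀, j₀)) fun h => hi₂ (mem_inter.1 h).2]
    exact fun h => hj₁ (RA_mono_right inter_subset_left h)
  have hinter : b j₀ + ∑ j ∈ RA R (A₁ ∩ A₂), b j ≤ ∑ j ∈ RA R A₁ ∩ RA R A₂, b j := by
    rw [← sum_insert hj]
    refine sum_le_sum_of_subset_of_nonneg (insert_subset (mem_inter.2 ⟨mem_RA.2 ⟨i₀, hi₁, hp⟩, hj₂⟩)
      (subset_inter (RA_mono_right inter_subset_left) (RA_mono_right inter_subset_right)))
      fun j _ _ => hb j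
  have hunion := hR (A₁ ∪ A₂)
  rw [RA_union] at hunion
  rw [surplus, surplus, sub_add_sub_comm, le_sub_iff_add_le, ← sum_union_inter (s₁ := A₁),
    ← sum_union_inter (s₁ := RA R A₁)]
  calc b j₀ + (∑ i ∈ A₁ ∪ A₂, a i + ∑ i ∈ A₁ ∩ A₂, a i)
      = ∑ i ∈ A₁ ∪ A₂, a i + (b j₀ + ∑ i ∈ A₁ ∩ A₂, a i) := by abel
    _ ≤ _ := add_le_add hunion ((add_le_add_right (hR _) _).trans hinter)

theorem erase_sub_single (hR : HallCondition R a b) (hp : (i₀, j₀) ∈ R) {g : G}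
    (hlow : ∀ A, i₀ ∈ A → j₀ ∉ RA (R.erase (i₀, j₀)) A → b j₀ - surplus R a b A ≤ g)
    (hup : ∀ A, i₀ ∉ A → j₀ ∈ RA R A → g ≤ surplus R a b A) :
    HallCondition (R.erase (i₀, j₀)) (a - Pi.single i₀ g) (b - Pi.single j₀ g) := by
  intro A
  simp only [Pi.sub_apply, sum_sub_distrib, sum_pi_single']
  by_cases hi : i₀ ∈ A
  · have hjR : j₀ ∈ RA R A := mem_RA.2 ⟨i₀, hi, hp⟩
    rw [if_pos hi]
    by_cases hj : j₀ ∈ RA (R.erase (i₀, j₀)) A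
    · have hRA : RA (R.erase (i₀, j₀)) A = RA R A := (RA_mono_left (erase_subset _ _)).antisymm
        (by simpa [hj] using RA_subset_insert_RA_erase (R := R) (A := A) (i₀, j₀))
      rw [hRA, if_pos hjR]
      exact sub_le_sub_right (hR A) g
    · have hRA : RA (R.erase (i₀, j₀)) A = (RA R A).erase j₀ :=
        (subset_erase.2 ⟨RA_mono_left (erase_subset _ _), hj⟩).antisymm
          (subset_insert_iff.1 (RA_subset_insert_RA_erase _))
      have hbound := hlow A hi hj
      rw [surplus, ← sum_erase_add _ _ hjR] at hbound
      rw [hRA, if_neg (notMem_erase _ _), sub_zero, sub_le_comm]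
      convert hbound using 1
      abel
  · rw [RA_erase_of_notMem hi, if_neg hi, sub_zero]
    split_ifs with hj
    · exact le_sub_comm.1 (hup A hi hj)
    · simpa using hR A

theorem exists_erase_sub_single (hR : HallCondition R a b) (hG : RieszInterpolation G)
    (ha : 0 ≤ a) (hb : 0 ≤ b) (hp : (i₀, j₀) ∈ R) :
    ∃ g, 0 ≤ g ∧ g ≤ a i₀ ∧ g ≤ b j₀ ∧
      HallCondition (R.erase (i₀, j₀)) (a - Pi.single i₀ g) (b - Pi.single j₀ g) := by
  classical
  set lower := insert 0 (((univ : Finset (Finset (Fin m))).filter fun A =>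
    i₀ ∈ A ∧ j₀ ∉ RA (R.erase (i₀, j₀)) A).image fun A => b j₀ - surplus R a b A)
  set upper := insert (a i₀) (insert (b j₀) (((univ : Finset (Finset (Fin m))).filter fun A =>
    i₀ ∉ A ∧ j₀ ∈ RA R A).image (surplus R a b)))
  have hcompat : ∀ x ∈ lower, ∀ y ∈ upper, x ≤ y := by
    simp only [lower, upper, forall_mem_insert, forall_mem_image, mem_filter, mem_univ, true_and,
      and_imp]
    refine ⟨⟨ha i₀, hb j₀, fun A _ _ => hR.surplus_nonneg A⟩, fun A₁ hi₁ hj₁ => ⟨?_, ?_, ?_⟩⟩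
    · exact sub_le_iff_le_add.2 (hR.le_add_surplus hb hp hi₁ hj₁)
    · exact sub_le_self _ (hR.surplus_nonneg A₁)
    · intro A₂ hi₂ hj₂
      rw [sub_le_iff_le_add, add_comm]
      exact hR.le_surplus_add_surplus hb hp hi₁ hj₁ hi₂ hj₂
  obtain ⟨g, hlow, hup⟩ :=
    hG.exists_between_finset (insert_nonempty _ _) (insert_nonempty _ _) hcompat
  simp only [forall_mem_insert, forall_mem_image, mem_filter, mem_univ, true_and, and_imp]
    at hlow hup
  exact ⟨g, hlow.1, hup.1, hup.2.1, hR.erase_sub_single hp hlow.2 hup.2.2⟩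

end HallCondition

theorem IsTransportPlan.add_single {c : Fin m → Fin n → G} {g : G}
    (hc : IsTransportPlan (R.erase (i₀, j₀)) (a - Pi.single i₀ g) (b - Pi.single j₀ g) c)
    (hg : 0 ≤ g) (hp : (i₀, j₀) ∈ R) :
    IsTransportPlan R a b (c + Pi.single i₀ (Pi.single j₀ g)) := by
  obtain ⟨hc₀, hrow, hcol, hsupp⟩ := hc
  have hsingle : (0 : Fin m → Fin n → G) ≤ Pi.single i₀ (Pi.single j₀ g) := by simpa using hg
  refine ⟨fun i j => add_nonneg (hc₀ i j) (hsingle i j),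
    fun i => ?_, fun j => ?_, fun i j hij => ?_⟩
  · simp only [Pi.add_apply, sum_add_distrib, hrow]
    by_cases hi : i = i₀
    · subst hi; simp
    · simp [hi]
  · simp only [Pi.add_apply, sum_add_distrib, hcol]
    by_cases hj : j = j₀
    · subst hj; simp [Pi.single_apply, ite_apply]
    · simp [hj, Pi.single_apply, ite_apply]
  · have hne : (i, j) ≠ (i₀, j₀) := fun h => hij (h ▸ hp)
    rw [Pi.add_apply, Pi.add_apply, hsupp i j fun h => hij (mem_of_mem_erase h)]
    have hsingle_eq := congrFun (Pi.uncurry_single_single i₀ j₀ g) (i, j)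
    rw [Function.uncurry_apply_pair, Pi.single_eq_of_ne hne] at hsingle_eq
    rw [hsingle_eq, zero_add]

theorem HallCondition.exists_isTransportPlan (hG : RieszInterpolation G) (ha : 0 ≤ a)
    (hb : 0 ≤ b) (hsum : ∑ i, a i = ∑ j, b j) (hR : HallCondition R a b) :
    ∃ c, IsTransportPlan R a b c := by
  induction R using Finset.strongInduction generalizing a b with
  | H R ih =>
  obtain rfl | ⟨⟨i₀, j₀⟩, hp⟩ := R.eq_empty_or_nonempty
  · obtain rfl := hR.eq_zero_of_empty ha
    obtain rfl : b = 0 := (Fintype.sum_eq_zero_iff_of_nonneg hb).1 (by simpa using hsum.symm)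
    exact ⟨0, by simp [IsTransportPlan]⟩
  · obtain ⟨g, hg, hga, hgb, hR'⟩ := hR.exists_erase_sub_single hG ha hb hp
    obtain ⟨c, hc⟩ := ih _ (erase_ssubset hp)
      (sub_nonneg.2 (Pi.single_le_of_le_apply ha hga))
      (sub_nonneg.2 (Pi.single_le_of_le_apply hb hgb))
      (by simp [sum_sub_distrib, hsum]) hR'
    exact ⟨_, hc.add_single hg hp⟩

end Hall

theorem stmt_11_general {G : Type*} [AddCommGroup G] [PartialOrder G] [IsOrderedAddMonoid G]
    (hriesz : ∀ a₁ a₂ b₁ b₂ : G, a₁ ≤ b₁ → a₁ ≤ b₂ → a₂ ≤ b₁ → a₂ ≤ b₂ →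
      ∃ c : G, a₁ ≤ c ∧ a₂ ≤ c ∧ c ≤ b₁ ∧ c ≤ b₂)
    {m n : ℕ} (a : Fin m → G) (b : Fin n → G)
    (ha : ∀ i, 0 ≤ a i) (hb : ∀ j, 0 ≤ b j)
    (hsum : ∑ i, a i = ∑ j, b j)
    (R : Finset (Fin m × Fin n))
    (hR : ∀ A : Finset (Fin m), ∑ i ∈ A, a i ≤ ∑ j ∈ RA R A, b j) :
    ∃ c : Fin m → Fin n → G,
      (∀ i j, 0 ≤ c i j) ∧
      (∀ i, ∑ j, c i j = a i) ∧
      (∀ j, ∑ i, c i j = b j) ∧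
      (∀ i j, (i, j) ∉ R → c i j = 0) :=
  HallCondition.exists_isTransportPlan hriesz ha hb hsum hR

theorem stmt_11 {G : Type*} [AddCommGroup G] [PartialOrder G] [IsOrderedAddMonoid G] [Countable G]
    (hdirected : ∀ g : G, ∃ a b : G, 0 ≤ a ∧ 0 ≤ b ∧ g = a - b)
    (hwunperf : ∀ (g : G) (N : ℕ), 0 < N → 0 < N • g → 0 < g)
    (hriesz : ∀ a₁ a₂ b₁ b₂ : G, a₁ ≤ b₁ → a₁ ≤ b₂ → a₂ ≤ b₁ → a₂ ≤ b₂ →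
      ∃ c : G, a₁ ≤ c ∧ a₂ ≤ c ∧ c ≤ b₁ ∧ c ≤ b₂)
    {m n : ℕ} (a : Fin m → G) (b : Fin n → G)
    (ha : ∀ i, 0 ≤ a i) (hb : ∀ j, 0 ≤ b j)
    (hsum : ∑ i, a i = ∑ j, b j)
    (R : Finset (Fin m × Fin n))
    (hR : ∀ A : Finset (Fin m), ∑ i ∈ A, a i ≤ ∑ j ∈ RA R A, b j) :
    ∃ c : Fin m → Fin n → G,
      (∀ i j, 0 ≤ c i j) ∧
      (∀ i, ∑ j, c i j = a i) ∧
      (∀ j, ∑ i, c i j = b j) ∧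
      (∀ i j, (i, j) ∉ R → c i j = 0) :=
  stmt_11_general hriesz a b ha hb hsum R hR
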